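/- Let Γ be a group generated by a finite symmetric set S. Then for every b ∈ ω²(Γ) there exists a constant C(b) ∈ ℝ such that for every real closed extension field R of ℝ and every completely positive ℂ-linear functional φ : ω(Γ) → C = R[i] with φ(a*) = conj(φ(a)) for all a ∈ ω(Γ), one has |φ(b)| ≤ C(b)·φ(Δ(S)). -/

import Mathlib

open Polynomial Matrix

/-- A linearly ordered field is *real closed* if every nonnegative element is a square and
every polynomial of odd degree has a root. -/
def IsRealClosed' (R : Type*) [Field R] [LinearOrder R] [IsStrictOrderedRing R] : Prop :=
  (∀ x : R, 0 ≤ x → ∃ y : R, y ^ 2 = x) ∧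
    ∀ p : Polynomial R, Odd p.natDegree → ∃ x : R, p.IsRoot x

noncomputable section

set_option maxRecDepth 8000

/-- `Cplx R = R[i] = R[X]/(X² + 1)`. -/
abbrev Cplx (R : Type*) [CommRing R] : Type _ := AdjoinRoot (X ^ 2 + 1 : R[X])

namespace Cplx

variable (R : Type*) [CommRing R]

/-- The imaginary unit `i` of `R[i]`. -/
def I : Cplx R := AdjoinRoot.root _

theorem I_sq : (I R) ^ 2 = -1 := by
  have h : (I R) ^ 2 + 1 = 0 := by
    have h := AdjoinRoot.eval₂_root (X ^ 2 + 1 : R[X])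
    simpa only [eval₂_add, eval₂_pow, eval₂_X, eval₂_one, I] using h
  exact eq_neg_of_add_eq_zero_left h

variable {R}

/-- Conjugation on `R[i]`: the `R`-algebra involution determined by `i ↦ -i`. -/
def conj : Cplx R →+* Cplx R :=
  AdjoinRoot.lift (algebraMap R _) (-(I R)) (by
    have h : (I R) ^ 2 + 1 = 0 := by
      have h := AdjoinRoot.eval₂_root (X ^ 2 + 1 : R[X])
      simpa only [eval₂_add, eval₂_pow, eval₂_X, eval₂_one, I] using h
    simp only [eval₂_add, eval₂_pow, eval₂_X, eval₂_one]
    calc (-(I R)) ^ 2 + 1 = (I R) ^ 2 + 1 := by ring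
    _ = 0 := h)

/-- `z ∈ R[i]` is *nonnegative* if it lies in `R` and is nonnegative there. -/
def nonneg {R' : Type*} [Field R'] [LinearOrder R'] [IsStrictOrderedRing R'] (z : Cplx R') : Prop :=
  ∃ r : R', 0 ≤ r ∧ z = algebraMap R' (Cplx R') r

/-- `z ∈ R[i]` is *positive* if it lies in `R` and is positive there. -/
def pos {R' : Type*} [Field R'] [LinearOrder R'] [IsStrictOrderedRing R'] (z : Cplx R') : Prop :=
  ∃ r : R', 0 < r ∧ z = algebraMap R' (Cplx R') r

/-- The embedding `ℂ = ℝ[i] → R[i]` induced by an embedding `f : ℝ → R`,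
`x + y·i ↦ f x + f y · i`. -/
def emb (f : ℝ →+* R) : ℂ →+* Cplx R where
  toFun z := algebraMap R (Cplx R) (f z.re) + algebraMap R (Cplx R) (f z.im) * I R
  map_one' := by simp
  map_zero' := by simp
  map_add' z w := by
    simp only [Complex.add_re, Complex.add_im, map_add]
    ring
  map_mul' z w := by
    have hI : (I R) ^ 2 = -1 := I_sq R
    simp only [Complex.mul_re, Complex.mul_im, map_add, map_sub, _root_.map_mul]
    linear_combination (-(algebraMap R (Cplx R) (f z.im) * algebraMap R (Cplx R) (f w.im))) * hI

/-- A matrix with entries in `R[i]` is positive semidefinite if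
`∑ⱼₖ conj(zⱼ)·zₖ·Mⱼₖ ≥ 0` for all vectors `z`. -/
def PSD {R' : Type*} [Field R'] [LinearOrder R'] [IsStrictOrderedRing R'] {m : ℕ}
    (M : Matrix (Fin m) (Fin m) (Cplx R')) : Prop :=
  ∀ z : Fin m → Cplx R', Cplx.nonneg (∑ j, ∑ k, Cplx.conj (z j) * z k * M j k)

end Cplx

universe u v


variable (Γ : Type u) [Group Γ]

/-- The involution of the complex group algebra `ℂ[Γ]`:
`(∑ a_g·g)* = ∑ conj(a_g)·g⁻¹`. -/
def gstar (a : MonoidAlgebra ℂ Γ) : MonoidAlgebra ℂ Γ :=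
  a.coeff.sum fun g c => MonoidAlgebra.single g⁻¹ (starRingEnd ℂ c)

/-- The `ℓ¹`-norm of an element of `ℂ[Γ]`: `‖∑ a_g·g‖₁ = ∑ |a_g|`. -/
def l1norm (a : MonoidAlgebra ℂ Γ) : ℝ :=
  a.coeff.sum fun _ c => ‖c‖

/-- The set `Σ²ℂ[Γ]` of sums of hermitian squares in the group algebra. -/
def SOS : Set (MonoidAlgebra ℂ Γ) :=
  {x | ∃ (n : ℕ) (a : Fin n → MonoidAlgebra ℂ Γ), x = ∑ i, gstar Γ (a i) * a i}

/-- The hermitian elements `ℂ[Γ]^h = {a : a* = a}`. -/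
def herm : Set (MonoidAlgebra ℂ Γ) := {a | gstar Γ a = a}

/-- The augmentation homomorphism `ε : ℂ[Γ] → ℂ`, `∑ a_g·g ↦ ∑ a_g`. -/
def aug : MonoidAlgebra ℂ Γ →ₐ[ℂ] ℂ := MonoidAlgebra.lift ℂ ℂ Γ 1

/-- The augmentation ideal `ω(Γ) = ker ε`. -/
def omega : Set (MonoidAlgebra ℂ Γ) := {a | aug Γ a = 0}

/-- The hermitian part `ω(Γ)^h` of the augmentation ideal. -/
def omegaH : Set (MonoidAlgebra ℂ Γ) := {a | a ∈ omega Γ ∧ gstar Γ a = a}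

/-- `Σ²ω(Γ)`: sums of hermitian squares of elements of the augmentation ideal. -/
def SOSomega : Set (MonoidAlgebra ℂ Γ) :=
  {x | ∃ (n : ℕ) (a : Fin n → MonoidAlgebra ℂ Γ),
    (∀ i, a i ∈ omega Γ) ∧ x = ∑ i, gstar Γ (a i) * a i}

/-- `ω²(Γ)`, the `ℂ`-span of products of two elements of the augmentation ideal. -/
def omegaSq : Set (MonoidAlgebra ℂ Γ) :=
  (Submodule.span ℂ {x : MonoidAlgebra ℂ Γ |
    ∃ a ∈ omega Γ, ∃ b ∈ omega Γ, x = a * b} : Submodule ℂ (MonoidAlgebra ℂ Γ))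

/-- `c(g) = g - 1 ∈ ω(Γ)`. -/
def cE (g : Γ) : MonoidAlgebra ℂ Γ := MonoidAlgebra.of ℂ Γ g - 1

/-- The Laplace operator `Δ(S) = |S| - ∑_{s ∈ S} s` of a finite subset `S ⊆ Γ`. -/
def Delta (S : Finset Γ) : MonoidAlgebra ℂ Γ :=
  (S.card : MonoidAlgebra ℂ Γ) - ∑ s ∈ S, MonoidAlgebra.of ℂ Γ s


section OmegaFunctional

variable {R : Type v} [Field R] [LinearOrder R] [IsStrictOrderedRing R]
variable {G : Type u} [Group G]

/-- The conjugate transpose of a matrix over `ℂ[Γ]`: `(M*)ⱼₖ = (Mₖⱼ)*`. -/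
def mstar {m : ℕ} (M : Matrix (Fin m) (Fin m) (MonoidAlgebra ℂ G)) :
    Matrix (Fin m) (Fin m) (MonoidAlgebra ℂ G) := fun j k => gstar G (M k j)

/-- `φ : ω(Γ) → C = R[i]` is `ℂ`-linear and satisfies `φ(a*) = conj (φ a)`.
(A functional on the augmentation ideal is encoded as a total map on `ℂ[Γ]`, with all
conditions imposed only on `ω(Γ)`.) -/
def OmegaHermLinear (f : ℝ →+* R) (φ : MonoidAlgebra ℂ G → Cplx R) : Prop :=
  (∀ a b : MonoidAlgebra ℂ G, a ∈ omega G → b ∈ omega G → φ (a + b) = φ a + φ b) ∧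
  (∀ (c : ℂ) (a : MonoidAlgebra ℂ G), a ∈ omega G → φ (c • a) = Cplx.emb f c * φ a) ∧
  (∀ a : MonoidAlgebra ℂ G, a ∈ omega G → φ (gstar G a) = Cplx.conj (φ a))

/-- `φ : ω(Γ) → C = R[i]` is *completely positive*: for every `m`, the entrywise map
`Mₘ(ω(Γ)) → Mₘ(C)` sends sums of hermitian squares to positive semidefinite matrices. -/
def OmegaCompletelyPositive (φ : MonoidAlgebra ℂ G → Cplx R) : Prop :=
  ∀ (m n : ℕ) (B : Fin n → Matrix (Fin m) (Fin m) (MonoidAlgebra ℂ G)),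
    (∀ l j k, B l j k ∈ omega G) →
    Cplx.PSD (fun j k => φ ((∑ l, mstar (B l) * B l) j k))

/-- `φ : ω(Γ) → C = R[i]` is *positive*: `φ(a*a) ≥ 0` for all `a ∈ ω(Γ)`. -/
def OmegaPositive (φ : MonoidAlgebra ℂ G → Cplx R) : Prop :=
  ∀ a ∈ omega G, Cplx.nonneg (φ (gstar G a * a))

end OmegaFunctional

/-!
Write `x ≤ y` for `y - x ∈ Σ²ω(Γ)`. The set of `z ∈ ω(Γ)` with `z*z ≤ C·Δ` for some real `C`
is a subspace, because `(x+y)*(x+y) ≤ 2x*x + 2y*y`, and it is stable under left multiplication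
by `Γ`, because `(gz)*(gz) = z*z`. Symmetry of `S` gives `2Δ = ∑_{s ∈ S} (s-1)*(s-1)`, so the subspace
contains every `s - 1` with `s ∈ S`; as `xy - 1 = x(y - 1) + (x - 1)` and `S` generates `Γ`, it
contains all `g - 1`, which span `ω(Γ)`. Applying a positive `φ` gives `|φ(z*z)| ≤ C·φ(Δ)`.
By polarization every product `xy` with `x, y ∈ ω(Γ)` is a combination of four elements `z*z`
with `z ∈ ω(Γ)`, and the triangle inequality in `R[i]` extends the bound to all of `ω²(Γ)`.
-/

namespace Cplx

section CommRing

variable {R : Type*} [CommRing R]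

theorem algebraMap_injective [IsDomain R] : Function.Injective (algebraMap R (Cplx R)) := by
  have hdeg : (X ^ 2 + 1 : R[X]).degree = 2 := by
    simpa using Polynomial.degree_X_pow_add_C (R := R) (n := 2) (by norm_num) 1
  rw [AdjoinRoot.algebraMap_eq]
  exact AdjoinRoot.of.injective_of_degree_ne_zero (by rw [hdeg]; norm_num)

theorem conj_algebraMap (x : R) : conj (algebraMap R (Cplx R) x) = algebraMap R (Cplx R) x := by
  rw [AdjoinRoot.algebraMap_eq]
  exact AdjoinRoot.lift_of _

theorem conj_I : conj (I R) = -I R := AdjoinRoot.lift_root _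

theorem emb_ofReal (f : ℝ →+* R) (r : ℝ) : emb f r = algebraMap R (Cplx R) (f r) := by
  simp [emb]

end CommRing

variable {R : Type*} [Field R] [LinearOrder R] [IsStrictOrderedRing R]

/-- `|z| ≤ M`, stated through the coordinates `z = A + B·i` so that no square roots in `R`
are needed. -/
def AbsLE (z : Cplx R) (M : R) : Prop :=
  0 ≤ M ∧ ∃ A B : R,
    z = algebraMap R (Cplx R) A + algebraMap R (Cplx R) B * I R ∧ A ^ 2 + B ^ 2 ≤ M ^ 2

theorem absLE_algebraMap {r M : R} (hr : 0 ≤ r) (hrM : r ≤ M) :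
    AbsLE (algebraMap R (Cplx R) r) M :=
  ⟨hr.trans hrM, r, 0, by simp, by nlinarith⟩

theorem absLE_zero {M : R} (hM : 0 ≤ M) : AbsLE 0 M := by
  simpa using absLE_algebraMap le_rfl hM

theorem AbsLE.add {z w : Cplx R} {M N : R} (hz : AbsLE z M) (hw : AbsLE w N) :
    AbsLE (z + w) (M + N) := by
  obtain ⟨hM, A₁, B₁, rfl, h₁⟩ := hz
  obtain ⟨hN, A₂, B₂, rfl, h₂⟩ := hw
  refine ⟨add_nonneg hM hN, A₁ + A₂, B₁ + B₂, by simp only [map_add]; ring, ?_⟩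
  -- Cauchy–Schwarz: `A₁A₂ + B₁B₂ ≤ MN`
  have hcross : A₁ * A₂ + B₁ * B₂ ≤ M * N := by
    nlinarith [sq_nonneg (A₁ * B₂ - A₂ * B₁), mul_nonneg hM hN,
      mul_le_mul h₁ h₂ (by positivity) (by positivity)]
  nlinarith

theorem AbsLE.mul {z w : Cplx R} {M N : R} (hz : AbsLE z M) (hw : AbsLE w N) :
    AbsLE (z * w) (M * N) := by
  obtain ⟨hM, A₁, B₁, rfl, h₁⟩ := hz
  obtain ⟨hN, A₂, B₂, rfl, h₂⟩ := hw
  refine ⟨mul_nonneg hM hN, A₁ * A₂ - B₁ * B₂, A₁ * B₂ + B₁ * A₂, ?_, ?_⟩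
  · simp only [map_sub, map_add, _root_.map_mul]
    linear_combination (algebraMap R (Cplx R) B₁ * algebraMap R (Cplx R) B₂) * I_sq R
  · calc (A₁ * A₂ - B₁ * B₂) ^ 2 + (A₁ * B₂ + B₁ * A₂) ^ 2
        = (A₁ ^ 2 + B₁ ^ 2) * (A₂ ^ 2 + B₂ ^ 2) := by ring
      _ ≤ M ^ 2 * N ^ 2 := mul_le_mul h₁ h₂ (by positivity) (by positivity)
      _ = (M * N) ^ 2 := by ring

theorem absLE_emb (f : ℝ →+*o R) (c : ℂ) : AbsLE (emb f.toRingHom c) (f ‖c‖) := by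
  refine ⟨by simpa using f.monotone' (norm_nonneg c), f c.re, f c.im, rfl, le_of_eq ?_⟩
  rw [← map_pow, ← map_pow, ← map_pow, ← map_add, Complex.sq_norm, Complex.normSq_apply]
  ring_nf

theorem AbsLE.le_of_sq_eq_mul_conj {z : Cplx R} {M t : R} (hz : AbsLE z M) (ht : 0 ≤ t)
    (htz : algebraMap R (Cplx R) (t ^ 2) = z * conj z) : t ≤ M := by
  obtain ⟨hM, A, B, rfl, hAB⟩ := hz
  have hsq : t ^ 2 = A ^ 2 + B ^ 2 := by
    refine algebraMap_injective (htz.trans ?_)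
    simp only [map_add, _root_.map_mul, map_pow, conj_algebraMap, conj_I]
    linear_combination (-(algebraMap R (Cplx R) B) ^ 2) * I_sq R
  exact (pow_le_pow_iff_left₀ ht hM two_ne_zero).mp (hsq ▸ hAB)

end Cplx

open MonoidAlgebra

section GroupAlgebra

variable {G : Type u} [Group G]

theorem gstar_single (g : G) (c : ℂ) :
    gstar G (single g c) = single g⁻¹ (starRingEnd ℂ c) :=
  Finsupp.sum_single_index (by simp)

theorem gstar_add (a b : MonoidAlgebra ℂ G) : gstar G (a + b) = gstar G a + gstar G b :=
  Finsupp.sum_add_index' (by simp) (fun _ _ _ => by rw [map_add, MonoidAlgebra.single_add])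

theorem gstar_zero : gstar G (0 : MonoidAlgebra ℂ G) = 0 := by
  simp [gstar]

theorem gstar_gstar (a : MonoidAlgebra ℂ G) : gstar G (gstar G a) = a := by
  induction a using MonoidAlgebra.induction_linear with
  | zero => simp [gstar_zero]
  | add a b ha hb => rw [gstar_add, gstar_add, ha, hb]
  | single g c => simp [gstar_single]

theorem gstar_mul (a b : MonoidAlgebra ℂ G) : gstar G (a * b) = gstar G b * gstar G a := by
  induction a using MonoidAlgebra.induction_linear with
  | zero => simp [gstar_zero]
  | add a₁ a₂ h₁ h₂ => rw [add_mul, gstar_add, gstar_add, h₁, h₂, mul_add]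
  | single g c =>
    induction b using MonoidAlgebra.induction_linear with
    | zero => simp [gstar_zero]
    | add b₁ b₂ h₁ h₂ => rw [mul_add, gstar_add, gstar_add, h₁, h₂, add_mul]
    | single h d => simp [single_mul_single, gstar_single, mul_comm]

theorem gstar_smul (c : ℂ) (a : MonoidAlgebra ℂ G) :
    gstar G (c • a) = starRingEnd ℂ c • gstar G a := by
  induction a using MonoidAlgebra.induction_linear with
  | zero => simp [gstar_zero]
  | add a b ha hb => rw [smul_add, gstar_add, ha, hb, gstar_add, smul_add]
  | single g d => simp [gstar_single]

instance : StarRing (MonoidAlgebra ℂ G) where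
  star := gstar G
  star_involutive := gstar_gstar
  star_mul := gstar_mul
  star_add := gstar_add

instance : StarModule ℂ (MonoidAlgebra ℂ G) where
  star_smul := gstar_smul

theorem gstar_eq_star (a : MonoidAlgebra ℂ G) : gstar G a = star a := rfl

theorem star_of_mul_of (g : G) : star (of ℂ G g) * of ℂ G g = 1 := by
  simp [← gstar_eq_star, gstar_single, single_mul_single, one_def]

theorem aug_single (g : G) (c : ℂ) : aug G (single g c) = c := by
  simp [aug]

theorem aug_star (a : MonoidAlgebra ℂ G) : aug G (star a) = starRingEnd ℂ (aug G a) := by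
  induction a using MonoidAlgebra.induction_linear with
  | zero => simp
  | add a b ha hb => rw [star_add, map_add, map_add, ha, hb, map_add]
  | single g c => rw [← gstar_eq_star, gstar_single, aug_single, aug_single]

theorem add_mem_omega {a b : MonoidAlgebra ℂ G} (ha : a ∈ omega G) (hb : b ∈ omega G) :
    a + b ∈ omega G := by
  simp_all [omega]

theorem smul_mem_omega (c : ℂ) {a : MonoidAlgebra ℂ G} (ha : a ∈ omega G) :
    c • a ∈ omega G := by
  simp_all [omega]

theorem sub_mem_omega {a b : MonoidAlgebra ℂ G} (ha : a ∈ omega G) (hb : b ∈ omega G) :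
    a - b ∈ omega G := by
  simp_all [omega]

theorem mul_mem_omega_left (x : MonoidAlgebra ℂ G) {a : MonoidAlgebra ℂ G} (ha : a ∈ omega G) :
    x * a ∈ omega G := by
  simp_all [omega]

theorem star_mem_omega {a : MonoidAlgebra ℂ G} (ha : a ∈ omega G) : star a ∈ omega G := by
  simp_all [omega, aug_star]

theorem cE_mem_omega (g : G) : cE G g ∈ omega G := by
  simp [omega, cE, aug_single]

theorem Delta_mem_omega (S : Finset G) : Delta G S ∈ omega G := by
  simp [omega, Delta, aug_single]

end GroupAlgebra

section SumsOfSquares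

variable {G : Type u} [Group G]

theorem zero_mem_SOSomega : (0 : MonoidAlgebra ℂ G) ∈ SOSomega G :=
  ⟨0, fun _ => 0, fun i => i.elim0, by simp⟩

theorem star_mul_self_mem_SOSomega {a : MonoidAlgebra ℂ G} (ha : a ∈ omega G) :
    star a * a ∈ SOSomega G :=
  ⟨1, fun _ => a, fun _ => ha, by simp [gstar_eq_star]⟩

theorem add_mem_SOSomega {x y : MonoidAlgebra ℂ G} (hx : x ∈ SOSomega G) (hy : y ∈ SOSomega G) :
    x + y ∈ SOSomega G := by
  obtain ⟨n, a, ha, rfl⟩ := hx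
  obtain ⟨m, b, hb, rfl⟩ := hy
  refine ⟨n + m, Fin.addCases a b, Fin.addCases (by simpa using ha) (by simpa using hb), ?_⟩
  simp [Fin.sum_univ_add]

theorem sum_mem_SOSomega {ι : Type*} (s : Finset ι) {x : ι → MonoidAlgebra ℂ G}
    (hx : ∀ i ∈ s, x i ∈ SOSomega G) : ∑ i ∈ s, x i ∈ SOSomega G :=
  Finset.sum_induction x (· ∈ SOSomega G) (fun _ _ => add_mem_SOSomega) zero_mem_SOSomega hx

theorem smul_mem_SOSomega {r : ℝ} (hr : 0 ≤ r) {x : MonoidAlgebra ℂ G} (hx : x ∈ SOSomega G) :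
    (r : ℂ) • x ∈ SOSomega G := by
  obtain ⟨n, a, ha, rfl⟩ := hx
  refine ⟨n, fun i => (√r : ℂ) • a i, fun i => smul_mem_omega _ (ha i), ?_⟩
  simp only [gstar_eq_star, star_smul, Finset.smul_sum, smul_mul_smul_comm, Complex.star_def,
    Complex.conj_ofReal, ← Complex.ofReal_mul, Real.mul_self_sqrt hr]

theorem SOSomega_subset_omega {x : MonoidAlgebra ℂ G} (hx : x ∈ SOSomega G) : x ∈ omega G := by
  obtain ⟨n, a, ha, rfl⟩ := hx
  simp_all [omega]

theorem star_cE_mul_cE (g : G) : star (cE G g) * cE G g = 2 - of ℂ G g - of ℂ G g⁻¹ := by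
  have hstar : star (of ℂ G g) = of ℂ G g⁻¹ := by simp [← gstar_eq_star, gstar_single]
  have hmul : of ℂ G g⁻¹ * of ℂ G g = 1 := by simp [one_def]
  simp only [cE, star_sub, star_one, hstar, sub_mul, mul_sub, hmul, one_mul, mul_one]
  rw [← one_add_one_eq_two]
  abel

theorem two_smul_Delta {S : Finset G} (hsym : ∀ s ∈ S, s⁻¹ ∈ S) :
    (2 : ℂ) • Delta G S = ∑ s ∈ S, star (cE G s) * cE G s := by
  have hinv : ∑ s ∈ S, of ℂ G s⁻¹ = ∑ s ∈ S, of ℂ G s :=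
    Finset.sum_nbij' (· ⁻¹) (· ⁻¹) (by simpa using hsym) (by simpa using hsym)
      (by simp) (by simp) (by simp)
  simp only [star_cE_mul_cE, Finset.sum_sub_distrib, hinv, Finset.sum_const, Delta, nsmul_eq_mul]
  rw [two_smul, mul_two]
  abel

theorem Delta_mem_SOSomega {S : Finset G} (hsym : ∀ s ∈ S, s⁻¹ ∈ S) :
    Delta G S ∈ SOSomega G := by
  have h := smul_mem_SOSomega (r := 1 / 2) (by norm_num)
    (sum_mem_SOSomega S fun s _ => star_mul_self_mem_SOSomega (cE_mem_omega s))
  rwa [← two_smul_Delta hsym, smul_smul, show ((1 / 2 : ℝ) : ℂ) * 2 = 1 by norm_num,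
    one_smul] at h

end SumsOfSquares

section DeltaDominance

variable {G : Type u} [Group G]

def deltaDominated (S : Finset G) : Submodule ℂ (MonoidAlgebra ℂ G) where
  carrier := {z | z ∈ omega G ∧ ∃ C : ℝ, (C : ℂ) • Delta G S - star z * z ∈ SOSomega G}
  zero_mem' := ⟨by simp [omega], 0, by simpa using zero_mem_SOSomega⟩
  add_mem' := by
    rintro x y ⟨hx, C₁, hC₁⟩ ⟨hy, C₂, hC₂⟩
    refine ⟨add_mem_omega hx hy, 2 * (C₁ + C₂), ?_⟩
    -- `(x + y)*(x + y) + (x - y)*(x - y) = 2 x*x + 2 y*y`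
    have key : ((2 * (C₁ + C₂) : ℝ) : ℂ) • Delta G S - star (x + y) * (x + y) =
        ((2 : ℝ) : ℂ) • ((C₁ : ℂ) • Delta G S - star x * x) +
          ((2 : ℝ) : ℂ) • ((C₂ : ℂ) • Delta G S - star y * y) + star (x - y) * (x - y) := by
      simp only [star_add, star_sub, add_mul, mul_add, sub_mul, mul_sub]
      push_cast
      module
    rw [key]
    exact add_mem_SOSomega (add_mem_SOSomega (smul_mem_SOSomega zero_le_two hC₁)
      (smul_mem_SOSomega zero_le_two hC₂)) (star_mul_self_mem_SOSomega (sub_mem_omega hx hy))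
  smul_mem' := by
    rintro c z ⟨hz, C, hC⟩
    refine ⟨smul_mem_omega c hz, ‖c‖ ^ 2 * C, ?_⟩
    have key : ((‖c‖ ^ 2 * C : ℝ) : ℂ) • Delta G S - star (c • z) * (c • z) =
        ((‖c‖ ^ 2 : ℝ) : ℂ) • ((C : ℂ) • Delta G S - star z * z) := by
      rw [star_smul, smul_mul_smul_comm, Complex.star_def, Complex.conj_mul', smul_sub, smul_smul]
      push_cast
      rfl
    rw [key]
    exact smul_mem_SOSomega (sq_nonneg _) hC

theorem of_mul_mem_deltaDominated {S : Finset G} (g : G) {z : MonoidAlgebra ℂ G}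
    (hz : z ∈ deltaDominated S) : of ℂ G g * z ∈ deltaDominated S := by
  obtain ⟨hz, C, hC⟩ := hz
  refine ⟨mul_mem_omega_left _ hz, C, ?_⟩
  rwa [star_mul, mul_assoc, ← mul_assoc (star (of ℂ G g)), star_of_mul_of, one_mul]

theorem cE_mem_deltaDominated {S : Finset G} (hsym : ∀ s ∈ S, s⁻¹ ∈ S) {s : G} (hs : s ∈ S) :
    cE G s ∈ deltaDominated S := by
  classical
  refine ⟨cE_mem_omega s, 2, ?_⟩
  rw [Complex.ofReal_ofNat, two_smul_Delta hsym, ← Finset.add_sum_erase S _ hs, add_sub_cancel_left]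
  exact sum_mem_SOSomega _ fun t _ => star_mul_self_mem_SOSomega (cE_mem_omega t)

theorem cE_mem_deltaDominated_of_closure {S : Finset G} (hsym : ∀ s ∈ S, s⁻¹ ∈ S) {g : G}
    (hg : g ∈ Subgroup.closure (S : Set G)) : cE G g ∈ deltaDominated S := by
  induction hg using Subgroup.closure_induction with
  | mem s hs => exact cE_mem_deltaDominated hsym hs
  | one => simpa only [cE, map_one, sub_self] using (deltaDominated S).zero_mem
  | mul x y _ _ hx hy =>
    have h : cE G (x * y) = of ℂ G x * cE G y + cE G x := by
      simp only [cE, map_mul]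
      noncomm_ring
    rw [h]
    exact add_mem (of_mul_mem_deltaDominated x hy) hx
  | inv x _ hx =>
    have h : cE G x⁻¹ = -(of ℂ G x⁻¹ * cE G x) := by
      simp only [cE, mul_sub, ← map_mul, inv_mul_cancel, map_one, mul_one]
      abel
    rw [h]
    exact neg_mem (of_mul_mem_deltaDominated x⁻¹ hx)

theorem sub_aug_smul_one_mem_span_cE (z : MonoidAlgebra ℂ G) :
    z - aug G z • 1 ∈ Submodule.span ℂ (Set.range (cE G)) := by
  induction z using MonoidAlgebra.induction_linear with
  | zero => simp
  | add a b ha hb =>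
    rw [map_add, add_smul, add_sub_add_comm]
    exact add_mem ha hb
  | single g c =>
    have h : single g c - aug G (single g c) • 1 = c • cE G g := by
      rw [aug_single, cE, smul_sub, MonoidAlgebra.of_apply, smul_single', mul_one]
    rw [h]
    exact Submodule.smul_mem _ c (Submodule.subset_span ⟨g, rfl⟩)

theorem omega_subset_deltaDominated {S : Finset G} (hsym : ∀ s ∈ S, s⁻¹ ∈ S)
    (hgen : Subgroup.closure (S : Set G) = ⊤) {z : MonoidAlgebra ℂ G} (hz : z ∈ omega G) :
    z ∈ deltaDominated S := by
  have hspan : Submodule.span ℂ (Set.range (cE G)) ≤ deltaDominated S := by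
    rw [Submodule.span_le]
    rintro _ ⟨g, rfl⟩
    exact cE_mem_deltaDominated_of_closure hsym (hgen ▸ Subgroup.mem_top g)
  simpa [show aug G z = 0 from hz] using hspan (sub_aug_smul_one_mem_span_cE z)

end DeltaDominance

theorem polarization {A : Type*} [Ring A] [StarRing A] [Algebra ℂ A] [StarModule ℂ A] (x y : A) :
    (4 : ℂ) • (x * y) =
      (star (y + star x) * (y + star x) - star (y - star x) * (y - star x)) +
        Complex.I • (star (y + Complex.I • star x) * (y + Complex.I • star x) -
          star (y - Complex.I • star x) * (y - Complex.I • star x)) := by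
  simp only [star_add, star_sub, star_smul, star_star, Complex.star_def, Complex.conj_I,
    mul_add, add_mul, sub_mul, mul_sub, smul_mul_assoc, mul_smul_comm, smul_sub, smul_add]
  match_scalars <;> simp [Complex.I_mul_I]; ring

section Functionals

variable {R : Type v} [Field R] {G : Type u} [Group G] {f : ℝ →+* R}
  {φ : MonoidAlgebra ℂ G → Cplx R}

theorem OmegaHermLinear.map_add (hφ : OmegaHermLinear f φ) {a b : MonoidAlgebra ℂ G}
    (ha : a ∈ omega G) (hb : b ∈ omega G) : φ (a + b) = φ a + φ b :=
  hφ.1 a b ha hb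

theorem OmegaHermLinear.map_smul (hφ : OmegaHermLinear f φ) (c : ℂ) {a : MonoidAlgebra ℂ G}
    (ha : a ∈ omega G) : φ (c • a) = Cplx.emb f c * φ a :=
  hφ.2.1 c a ha

theorem OmegaHermLinear.map_zero (hφ : OmegaHermLinear f φ) : φ 0 = 0 := by
  simpa using hφ.map_smul 0 (a := 0) (by simp [omega])

theorem OmegaCompletelyPositive.nonneg [LinearOrder R] [IsStrictOrderedRing R] (hφ : OmegaCompletelyPositive φ) {x : MonoidAlgebra ℂ G}
    (hx : x ∈ SOSomega G) : Cplx.nonneg (φ x) := by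
  obtain ⟨n, a, ha, rfl⟩ := hx
  -- complete positivity for `1 × 1` matrices
  simpa [Matrix.sum_apply, Matrix.mul_apply, mstar] using
    hφ 1 n (fun l => Matrix.of fun _ _ => a l) (fun l _ _ => ha l) (fun _ => 1)

end Functionals

section LaplacianBound

variable {G : Type u} [Group G]

/-- `|φ(b)| ≤ C·φ(Δ(S))`, uniformly in `R` and `φ`. -/
def LaplacianBound (S : Finset G) (b : MonoidAlgebra ℂ G) (C : ℝ) : Prop :=
  ∀ (R : Type v) (_ : Field R) (_ : LinearOrder R) (_ : IsStrictOrderedRing R) (f : ℝ →+*o R)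
    (φ : MonoidAlgebra ℂ G → Cplx R), OmegaHermLinear f.toRingHom φ → OmegaCompletelyPositive φ →
    ∀ d : R, 0 ≤ d → φ (Delta G S) = algebraMap R (Cplx R) d → Cplx.AbsLE (φ b) (f C * d)

def laplacianBounded (S : Finset G) : Submodule ℂ (MonoidAlgebra ℂ G) where
  carrier := {b | b ∈ omega G ∧ ∃ C : ℝ, LaplacianBound.{u, v} S b C}
  zero_mem' := by
    refine ⟨by simp [omega], 0, fun R _ _ _ f φ hφ _ d _ _ => ?_⟩
    rw [hφ.map_zero, map_zero, zero_mul]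
    exact Cplx.absLE_zero le_rfl
  add_mem' := by
    rintro b₁ b₂ ⟨hb₁, C₁, hC₁⟩ ⟨hb₂, C₂, hC₂⟩
    refine ⟨add_mem_omega hb₁ hb₂, C₁ + C₂, fun R _ _ _ f φ hφ hcp d hd hΔ => ?_⟩
    rw [hφ.map_add hb₁ hb₂, map_add, add_mul]
    exact (hC₁ R _ _ _ f φ hφ hcp d hd hΔ).add (hC₂ R _ _ _ f φ hφ hcp d hd hΔ)
  smul_mem' := by
    rintro c b ⟨hb, C, hC⟩
    refine ⟨smul_mem_omega c hb, ‖c‖ * C, fun R _ _ _ f φ hφ hcp d hd hΔ => ?_⟩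
    rw [hφ.map_smul c hb, map_mul, mul_assoc]
    exact (Cplx.absLE_emb f c).mul (hC R _ _ _ f φ hφ hcp d hd hΔ)

theorem star_mul_self_mem_laplacianBounded {S : Finset G} {z : MonoidAlgebra ℂ G}
    (hz : z ∈ deltaDominated S) : star z * z ∈ laplacianBounded.{u, v} S := by
  obtain ⟨hz, C, hC⟩ := hz
  have hzz := star_mul_self_mem_SOSomega hz
  refine ⟨SOSomega_subset_omega hzz, C, fun R _ _ _ f φ hφ hcp d hd hΔ => ?_⟩
  obtain ⟨r, hr, hφr⟩ := hcp.nonneg hzz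
  obtain ⟨r', hr', hφr'⟩ := hcp.nonneg hC
  -- `φ(C·Δ) = φ(z*z) + φ(C·Δ - z*z)` in `R`
  have hsplit := hφ.map_add (SOSomega_subset_omega hzz) (SOSomega_subset_omega hC)
  rw [add_sub_cancel, hφ.map_smul _ (Delta_mem_omega S), hΔ, Cplx.emb_ofReal, hφr, hφr',
    ← map_mul, ← map_add] at hsplit
  have hsum : f C * d = r + r' := Cplx.algebraMap_injective hsplit
  rw [hφr]
  exact Cplx.absLE_algebraMap hr (by linarith)

theorem mul_mem_laplacianBounded {S : Finset G} (hsym : ∀ s ∈ S, s⁻¹ ∈ S)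
    (hgen : Subgroup.closure (S : Set G) = ⊤) {x y : MonoidAlgebra ℂ G}
    (hx : x ∈ omega G) (hy : y ∈ omega G) : x * y ∈ laplacianBounded.{u, v} S := by
  have hsq : ∀ z ∈ omega G, star z * z ∈ laplacianBounded.{u, v} S := fun z hz =>
    star_mul_self_mem_laplacianBounded (omega_subset_deltaDominated hsym hgen hz)
  have hx' := star_mem_omega hx
  have hxy : x * y = (4 : ℂ)⁻¹ • ((4 : ℂ) • (x * y)) := by
    rw [smul_smul, inv_mul_cancel₀ (by norm_num), one_smul]
  rw [hxy, polarization]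
  refine Submodule.smul_mem _ _ (add_mem (sub_mem ?_ ?_) (Submodule.smul_mem _ _ (sub_mem ?_ ?_)))
  · exact hsq _ (add_mem_omega hy hx')
  · exact hsq _ (sub_mem_omega hy hx')
  · exact hsq _ (add_mem_omega hy (smul_mem_omega _ hx'))
  · exact hsq _ (sub_mem_omega hy (smul_mem_omega _ hx'))

theorem omegaSq_subset_laplacianBounded {S : Finset G} (hsym : ∀ s ∈ S, s⁻¹ ∈ S)
    (hgen : Subgroup.closure (S : Set G) = ⊤) : omegaSq G ⊆ laplacianBounded.{u, v} S := by
  refine Submodule.span_le.mpr ?_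
  rintro _ ⟨x, hx, y, hy, rfl⟩
  exact mul_mem_laplacianBounded hsym hgen hx hy

end LaplacianBound

/-- **Functionals on the augmentation ideal are bounded by the Laplacian on `ω²(Γ)`.**
Let `Γ` be generated by the finite symmetric set `S`.  For every `b ∈ ω²(Γ)` there is a
constant `C(b) ∈ ℝ` such that for every real closed extension field `R` of `ℝ` and every
completely positive `ℂ`-linear functional `φ : ω(Γ) → C = R[i]` with `φ(a*) = conj (φ a)`
one has `|φ(b)| ≤ C(b)·φ(Δ(S))` (the absolute value `|φ(b)|` being encoded by the element
`t ≥ 0` of `R` with `t² = φ(b)·conj(φ(b))`). -/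
theorem omega_cp_bounded_by_laplacian (S : Finset Γ)
    (hsym : ∀ s ∈ S, s⁻¹ ∈ S) (hgen : Subgroup.closure (S : Set Γ) = ⊤)
    (b : MonoidAlgebra ℂ Γ) (hb : b ∈ omegaSq Γ) :
    ∃ Cb : ℝ, ∀ (R : Type v) (_ : Field R) (_ : LinearOrder R) (_ : IsStrictOrderedRing R) (f : ℝ →+*o R),
      IsRealClosed' R →
      ∀ φ : MonoidAlgebra ℂ Γ → Cplx R,
        OmegaHermLinear f.toRingHom φ → OmegaCompletelyPositive φ →
        ∀ t : R, 0 ≤ t →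
          algebraMap R (Cplx R) (t ^ 2) = φ b * Cplx.conj (φ b) →
          Cplx.nonneg (algebraMap R (Cplx R) (f Cb) * φ (Delta Γ S) -
            algebraMap R (Cplx R) t) := by
  obtain ⟨-, C, hC⟩ := omegaSq_subset_laplacianBounded.{u, v} hsym hgen hb
  refine ⟨C, fun R _ _ _ f _ φ hφ hcp t ht htb => ?_⟩
  obtain ⟨d, hd, hΔ⟩ := hcp.nonneg (Delta_mem_SOSomega hsym)
  have htC : t ≤ f C * d := (hC R _ _ _ f φ hφ hcp d hd hΔ).le_of_sq_eq_mul_conj ht htb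
  rw [hΔ, ← map_mul, ← map_sub]
  exact ⟨_, sub_nonneg.mpr htC, rfl⟩
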